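/- Let V be a linear subspace of ℝⁿ, w ∈ ℝⁿ fixed, K : ℝ → (n×n symmetric real matrices) differentiable, and U : ℝ → ℝⁿ differentiable with U(t) − w ∈ V for all t and such that the equilibrium (stationarity) condition holds: K(t)·U(t) is orthogonal to V for all t. Then the strain energy e(t) = (1/2)·U(t)ᵀ·K(t)·U(t) is differentiable with de/dt = (1/2)·U(t)ᵀ·(dK/dt)(t)·U(t). -/

import Mathlib

/-!
Differentiating `uᵀKu` gives `uᵀK'u + 2 (Ku)·u'` when `K` is symmetric. Since `U - w` stays in the
closed subspace `V`, the velocity `U'` lies in `V`, so equilibrium `KU ⊥ V` kills the second term.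
-/

open Matrix

theorem HasDerivAt.mem_of_forall_sub_mem {𝕜 E : Type*} [NontriviallyNormedField 𝕜]
    [NormedAddCommGroup E] [NormedSpace 𝕜 E] {V : Submodule 𝕜 E} (hV : IsClosed (V : Set E))
    {f : 𝕜 → E} {f' w : E} {t : 𝕜} (hf : HasDerivAt f f' t) (hfV : ∀ s, f s - w ∈ V) :
    f' ∈ V := by
  refine hV.mem_of_tendsto (hasDerivAt_iff_tendsto_slope.mp hf) (Filter.Eventually.of_forall ?_)
  intro s
  have hdiff : f s - f t ∈ V := by simpa only [sub_sub_sub_cancel_right] using V.sub_mem (hfV s) (hfV t)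
  simpa only [slope, vsub_eq_sub, SetLike.mem_coe] using V.smul_mem _ hdiff

section Derivatives

variable {𝕜 ι : Type*} [NontriviallyNormedField 𝕜] [Fintype ι] {t : 𝕜}

theorem HasDerivAt.dotProduct {u v : 𝕜 → ι → 𝕜} {u' v' : ι → 𝕜}
    (hu : HasDerivAt u u' t) (hv : HasDerivAt v v' t) :
    HasDerivAt (fun s => u s ⬝ᵥ v s) (u' ⬝ᵥ v t + u t ⬝ᵥ v') t := by
  have hsum := HasDerivAt.fun_sum (u := Finset.univ) fun i _ =>
    (hasDerivAt_pi.mp hu i).fun_mul (hasDerivAt_pi.mp hv i)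
  simpa only [_root_.dotProduct, Finset.sum_add_distrib] using hsum

theorem hasDerivAt_mulVec {K : 𝕜 → Matrix ι ι 𝕜} {K' : Matrix ι ι 𝕜} {u : 𝕜 → ι → 𝕜}
    {u' : ι → 𝕜} (hK : ∀ i j, HasDerivAt (fun s => K s i j) (K' i j) t)
    (hu : HasDerivAt u u' t) :
    HasDerivAt (fun s => K s *ᵥ u s) (K' *ᵥ u t + K t *ᵥ u') t :=
  hasDerivAt_pi.mpr fun i => (hasDerivAt_pi.mpr (hK i)).dotProduct hu

theorem HasDerivAt.dotProduct_mulVec_self {K : 𝕜 → Matrix ι ι 𝕜} {K' : Matrix ι ι 𝕜}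
    {u : 𝕜 → ι → 𝕜} {u' : ι → 𝕜} (hKsymm : (K t).IsSymm)
    (hK : ∀ i j, HasDerivAt (fun s => K s i j) (K' i j) t) (hu : HasDerivAt u u' t) :
    HasDerivAt (fun s => u s ⬝ᵥ K s *ᵥ u s) (u t ⬝ᵥ K' *ᵥ u t + 2 * (K t *ᵥ u t ⬝ᵥ u')) t := by
  have hsymm : u t ⬝ᵥ K t *ᵥ u' = K t *ᵥ u t ⬝ᵥ u' := by
    rw [dotProduct_mulVec, ← mulVec_transpose, hKsymm.eq]
  convert hu.dotProduct (hasDerivAt_mulVec hK hu) using 1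
  rw [dotProduct_add, hsymm, dotProduct_comm u']
  ring

end Derivatives

/-- Sensitivity of the strain energy under prescribed boundary displacements:
if the admissible displacements form the affine subspace `w + V`, the stiffness
matrix `K(t)` is symmetric and differentiable (entrywise) in the design
parameter, the equilibrium displacement `U(t)` satisfies `U(t) − w ∈ V` and
`K(t)·U(t) ⊥ V`, then `e(t) = (1/2)·U(t)ᵀ·K(t)·U(t)` is differentiable with
`de/dt = (1/2)·U(t)ᵀ·(dK/dt)·U(t)`. -/
theorem strain_energy_sensitivity (n : ℕ)
    (V : Submodule ℝ (Fin n → ℝ)) (w : Fin n → ℝ)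
    (K : ℝ → Matrix (Fin n) (Fin n) ℝ)
    (hKsymm : ∀ t : ℝ, (K t).IsSymm)
    (hKdiff : ∀ i j : Fin n, Differentiable ℝ fun t : ℝ => K t i j)
    (U : ℝ → (Fin n → ℝ))
    (hUdiff : Differentiable ℝ U)
    (hUadm : ∀ t : ℝ, U t - w ∈ V)
    (hequil : ∀ t : ℝ, ∀ v ∈ V, dotProduct ((K t).mulVec (U t)) v = 0)
    (e : ℝ → ℝ)
    (he : ∀ t : ℝ, e t = (1 / 2) * dotProduct (U t) ((K t).mulVec (U t))) :
    Differentiable ℝ e ∧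
      ∀ t : ℝ,
        deriv e t =
          (1 / 2) *
            dotProduct (U t)
              ((Matrix.of fun i j => deriv (fun s : ℝ => K s i j) t).mulVec (U t)) := by
  have key : ∀ t, HasDerivAt e
      ((1 / 2) * (U t ⬝ᵥ (Matrix.of fun i j => deriv (fun s : ℝ => K s i j) t) *ᵥ U t)) t := by
    intro t
    have hU := (hUdiff t).hasDerivAt
    have hU'V : deriv U t ∈ V := hU.mem_of_forall_sub_mem V.closed_of_finiteDimensional hUadm
    have hQ := hU.dotProduct_mulVec_self (K' := Matrix.of fun i j => deriv (fun s => K s i j) t)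
      (hKsymm t) (fun i j => (hKdiff i j t).hasDerivAt)
    rw [hequil t _ hU'V, mul_zero, add_zero] at hQ
    simpa only [← he] using hQ.const_mul (1 / 2 : ℝ)
  exact ⟨fun t => (key t).differentiableAt, fun t => (key t).deriv⟩
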